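/- The multiplier language L_{x_1^{-1}} = {⊗(u,v) : u, v ∈ L_∞, ū x_1^{-1} = v̄ in F} is not a regular language. In particular, for every p there exist strings in L_{x_1^{-1}} (namely ⊗(b^p, b^p #^{p+1} b)) that cannot be pumped: for m > 0, ⊗(b^{p+m}, b^{p+m} #^{p+1} b) ∉ L_{x_1^{-1}}. -/

import Mathlib

/-- The relators of Thompson's group `F` in its standard infinite presentation:
`x_j x_i = x_i x_{j+1}` whenever `i < j`. -/
def thompsonRels : Set (FreeGroup ℕ) :=
  {r | ∃ i j : ℕ, i < j ∧
    r = FreeGroup.of j * FreeGroup.of i * (FreeGroup.of (j + 1))⁻¹ * (FreeGroup.of i)⁻¹}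

/-- Thompson's group `F`, presented by `⟨x_0, x_1, … | x_j x_i = x_i x_{j+1} (i < j)⟩`. -/
abbrev ThompsonF : Type := PresentedGroup thompsonRels

/-- The generator `x_n` of Thompson's group `F`. -/
def x (n : ℕ) : ThompsonF := PresentedGroup.of n

/-- The three-letter symbol alphabet `{a, b, #}` (with `h` denoting `#`). -/
inductive A : Type
  | a | b | h
deriving DecidableEq

instance instFintypeA : Fintype A :=
  ⟨{A.a, A.b, A.h}, fun x => by cases x <;> simp⟩

/-- The block `a^r b^s`. -/
def block (r s : ℕ) : List A := List.replicate r A.a ++ List.replicate s A.b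

/-- The string `a^{r 0} b^{s 0} # a^{r 1} b^{s 1} # ⋯ # a^{r M} b^{s M}`. -/
def lword (M : ℕ) (r s : ℕ → ℕ) : List A :=
  List.intercalate [A.h] ((List.range (M + 1)).map fun i => block (r i) (s i))

/-- The exponent conditions: exactly one of `r M, s M` is nonzero, and
`r i * s i > 0` implies `r (i+1) + s (i+1) > 0` for `i < M`. -/
def goodParams (M : ℕ) (r s : ℕ → ℕ) : Prop :=
  ((r M ≠ 0 ∧ s M = 0) ∨ (r M = 0 ∧ s M ≠ 0)) ∧
    ∀ i < M, 0 < r i * s i → 0 < r (i + 1) + s (i + 1)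

/-- The normal form language `L_∞` over `{a, b, #}`: all strings
`a^{r_0} b^{s_0} # ⋯ # a^{r_M} b^{s_M}` satisfying the exponent conditions,
together with the empty string. -/
def Linf : Language A :=
  {w | w = [] ∨ ∃ M r s, goodParams M r s ∧ w = lword M r s}

/-- The group element `x_0^{r_0} ⋯ x_M^{r_M} x_M^{-s_M} ⋯ x_0^{-s_0}` of Thompson's
group `F` encoded by the string `a^{r_0} b^{s_0} # ⋯ # a^{r_M} b^{s_M}`. -/
def gword (M : ℕ) (r s : ℕ → ℕ) : ThompsonF :=
  (((List.range (M + 1)).map fun i => x i ^ r i).prod) *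
    (((List.range (M + 1)).reverse.map fun i => (x i)⁻¹ ^ s i).prod)

/-- The element of Thompson's group `F` represented by a string in `L_∞`:
splitting on `#`, the `i`-th block `a^{r_i} b^{s_i}` contributes `x_i^{r_i}` to the
positive part and `x_i^{-s_i}` to the (reversed) negative part. -/
def evalL (w : List A) : ThompsonF :=
  let bs := ((w.splitOn A.h).zipIdx.map Prod.swap)
  ((bs.map fun p => x p.1 ^ (p.2.count A.a)).prod) *
    ((bs.reverse.map fun p => (x p.1)⁻¹ ^ (p.2.count A.b)).prod)

/-- The convolution of a pair of words: read the two words in parallel, padding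
the shorter with `⋄` (modelled by `none`). -/
def conv2 {Λ : Type} (u v : List Λ) : List (Option Λ × Option Λ) :=
  (List.range (max u.length v.length)).map (fun i => (u[i]?, v[i]?))

/-- The multiplier language `L_{x_1^{-1}}` of the `L_∞` normal form:
convolutions `⊗(u,v)` with `u, v ∈ L_∞` and `v̄ = ū x_1⁻¹` in `F`. -/
def Lx1inv : Language (Option A × Option A) :=
  {c | ∃ u ∈ Linf, ∃ v ∈ Linf, c = conv2 u v ∧ evalL v = evalL u * (x 1)⁻¹}

/-!
Since `x_0^{-q} x_1^{-1} = x_{q+1}^{-1} x_0^{-q}` in `F`, the convolution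
`⊗(b^q, b^q #^{p+1} b)` lies in `L_{x_1^{-1}}` exactly when `x_{q+1} = x_{p+1}`, that is when
`q = p`; that the generators `x_n` are pairwise distinct is seen from the standard action of `F`
by piecewise linear homeomorphisms of `ℝ`. A DFA with `N` states accepting `L_{x_1^{-1}}` would
accept `⊗(b^N, b^N #^{N+1} b)`, and the pumping lemma, applied inside its prefix of `N` letters
`(b, b)`, would make it accept `⊗(b^{N+k}, b^{N+k} #^{N+1} b)` for some `k > 0`.
-/
noncomputable section

/-- The inverse of the usual piecewise linear `x_n` (slope `2` on `[n - 1, n]`), so that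
`x_n ↦ thompsonPerm n` respects the composition order of `Equiv.Perm`. -/
def thompsonPerm (n : ℕ) : Equiv.Perm ℝ where
  toFun t := if t ≤ n - 1 then t else if t ≤ n + 1 then (t + n - 1) / 2 else t - 1
  invFun t := if t ≤ n - 1 then t else if t ≤ n then 2 * t - (n - 1) else t + 1
  left_inv t := by dsimp only; split_ifs <;> linarith
  right_inv t := by dsimp only; split_ifs <;> linarith

theorem thompsonPerm_mul {i j : ℕ} (h : i < j) :
    thompsonPerm j * thompsonPerm i = thompsonPerm i * thompsonPerm (j + 1) := by
  have hij : (i : ℝ) + 1 ≤ j := by exact_mod_cast h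
  ext t
  simp only [Equiv.Perm.coe_mul, Function.comp_apply, thompsonPerm, Equiv.coe_fn_mk]
  push_cast
  split_ifs <;> linarith

def thompsonRep : ThompsonF →* Equiv.Perm ℝ :=
  PresentedGroup.toGroup (f := thompsonPerm) <| by
    rintro _ ⟨i, j, h, rfl⟩
    simp [thompsonPerm_mul h]

end

theorem thompsonRep_x (n : ℕ) : thompsonRep (x n) = thompsonPerm n :=
  PresentedGroup.toGroup.of _

theorem x_injective : Function.Injective x := by
  have hne_of_lt : ∀ {i j : ℕ}, i < j → x i ≠ x j := by
    intro i j h hx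
    have hij : (i : ℝ) + 1 ≤ j := by exact_mod_cast h
    have := congr($(congrArg thompsonRep hx) (i : ℝ))
    simp only [thompsonRep_x, thompsonPerm, Equiv.coe_fn_mk] at this
    rw [if_neg (by linarith), if_pos (by linarith), if_pos (by linarith)] at this
    linarith
  intro i j hx
  by_contra hne
  rcases Nat.lt_or_gt_of_ne hne with h | h
  exacts [hne_of_lt h hx, hne_of_lt h hx.symm]

theorem x_mul_x {i j : ℕ} (h : i < j) : x j * x i = x i * x (j + 1) := by
  have hrel : FreeGroup.of j * FreeGroup.of i * (FreeGroup.of i * FreeGroup.of (j + 1))⁻¹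
      ∈ thompsonRels := ⟨i, j, h, by group⟩
  have := PresentedGroup.mk_eq_mk_of_mul_inv_mem hrel
  rw [map_mul, map_mul] at this
  exact this

theorem x_inv_pow_mul_x_inv {i j : ℕ} (h : i < j) (n : ℕ) :
    (x i)⁻¹ ^ n * (x j)⁻¹ = (x (j + n))⁻¹ * (x i)⁻¹ ^ n := by
  induction n generalizing j with
  | zero => simp
  | succ n ih =>
    have hstep : (x i)⁻¹ * (x j)⁻¹ = (x (j + 1))⁻¹ * (x i)⁻¹ := by
      rw [← mul_inv_rev, ← mul_inv_rev, x_mul_x h]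
    rw [pow_succ, mul_assoc, hstep, ← mul_assoc, ih (h.trans j.lt_succ_self), mul_assoc,
      ← pow_succ, Nat.succ_eq_add_one, Nat.add_right_comm, Nat.add_assoc]

theorem List.intercalate_append_singleton {α : Type*} (sep : List α) {L : List (List α)}
    (hL : L ≠ []) (l : List α) :
    sep.intercalate (L ++ [l]) = sep.intercalate L ++ sep ++ l := by
  induction L with
  | nil => exact absurd rfl hL
  | cons a L ih =>
    rcases eq_or_ne L [] with rfl | hne
    · simp
    · rw [List.cons_append, List.intercalate_cons_of_ne_nil (by simp),
        List.intercalate_cons_of_ne_nil hne, ih hne]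
      simp only [List.append_assoc]

@[simp]
theorem count_a_block (r s : ℕ) : (block r s).count A.a = r := by
  simp [block, List.count_replicate]

@[simp]
theorem count_b_block (r s : ℕ) : (block r s).count A.b = s := by
  simp [block, List.count_replicate]

@[simp]
theorem lword_zero (r s : ℕ → ℕ) : lword 0 r s = block (r 0) (s 0) := by
  simp [lword]

theorem lword_succ (M : ℕ) (r s : ℕ → ℕ) :
    lword (M + 1) r s = lword M r s ++ A.h :: block (r (M + 1)) (s (M + 1)) := by
  rw [lword, List.range_succ, List.map_append, List.map_singleton,
    List.intercalate_append_singleton _ (by simp)]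
  simp [lword]

theorem splitOn_lword (M : ℕ) (r s : ℕ → ℕ) :
    (lword M r s).splitOn A.h = (List.range (M + 1)).map fun i => block (r i) (s i) :=
  List.splitOn_intercalate _ (by simp [block, List.mem_replicate]) (by simp)

theorem evalL_lword (M : ℕ) (r s : ℕ → ℕ) : evalL (lword M r s) = gword M r s := by
  have hidx : (((List.range (M + 1)).map fun i => block (r i) (s i)).zipIdx.map Prod.swap) =
      (List.range (M + 1)).map fun i => (i, block (r i) (s i)) :=
    List.ext_getElem (by simp) fun i _ _ => by simp
  simp only [evalL, gword, splitOn_lword, hidx, List.map_reverse, List.map_map]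
  simp [Function.comp_def]

theorem gword_succ_zero_left (M : ℕ) (s : ℕ → ℕ) :
    gword (M + 1) (fun _ => 0) s = (x (M + 1))⁻¹ ^ s (M + 1) * gword M (fun _ => 0) s := by
  simp [gword, List.range_succ]

section OnlyOuterBlocks

variable {p : ℕ} {s : ℕ → ℕ}

theorem lword_succ_zero_left_of_inner_eq_zero (hs : ∀ i, 0 < i → i ≤ p → s i = 0) :
    lword (p + 1) (fun _ => 0) s =
      List.replicate (s 0) A.b ++ List.replicate (p + 1) A.h ++ List.replicate (s (p + 1)) A.b := by
  have hprefix : ∀ k ≤ p,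
      lword k (fun _ => 0) s = List.replicate (s 0) A.b ++ List.replicate k A.h := by
    intro k hk
    induction k with
    | zero => simp [block]
    | succ k ih =>
      rw [lword_succ, ih (by omega), hs (k + 1) k.succ_pos hk]
      simp [block, List.replicate_succ']
  rw [lword_succ, hprefix p le_rfl]
  simp [block, List.replicate_succ']

theorem gword_succ_zero_left_of_inner_eq_zero (hs : ∀ i, 0 < i → i ≤ p → s i = 0) :
    gword (p + 1) (fun _ => 0) s = (x (p + 1))⁻¹ ^ s (p + 1) * (x 0)⁻¹ ^ s 0 := by
  have hprefix : ∀ k ≤ p, gword k (fun _ => 0) s = (x 0)⁻¹ ^ s 0 := by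
    intro k hk
    induction k with
    | zero => simp [gword]
    | succ k ih =>
      rw [gword_succ_zero_left, ih (by omega), hs (k + 1) k.succ_pos hk, pow_zero, one_mul]
  rw [gword_succ_zero_left, hprefix p le_rfl]

end OnlyOuterBlocks

theorem replicate_mem_Linf (q : ℕ) : List.replicate q A.b ∈ Linf := by
  rcases Nat.eq_zero_or_pos q with rfl | hq
  · exact Or.inl rfl
  · exact Or.inr ⟨0, fun _ => 0, fun _ => q, by simp [goodParams, hq.ne'], by simp [block]⟩

theorem evalL_replicate (q : ℕ) : evalL (List.replicate q A.b) = (x 0)⁻¹ ^ q := by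
  have : List.replicate q A.b = lword 0 (fun _ => 0) (fun _ => q) := by simp [block]
  rw [this, evalL_lword]
  simp [gword]

theorem replicate_append_mem_Linf (q p : ℕ) :
    List.replicate q A.b ++ List.replicate (p + 1) A.h ++ [A.b] ∈ Linf := by
  refine Or.inr ⟨p + 1, fun _ => 0, fun i => if i = 0 then q else if i ≤ p then 0 else 1,
    by simp [goodParams], ?_⟩
  rw [lword_succ_zero_left_of_inner_eq_zero (by grind)]
  simp

theorem evalL_replicate_append (q p : ℕ) :
    evalL (List.replicate q A.b ++ List.replicate (p + 1) A.h ++ [A.b]) =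
      (x (p + 1))⁻¹ * (x 0)⁻¹ ^ q := by
  set s : ℕ → ℕ := fun i => if i = 0 then q else if i ≤ p then 0 else 1
  have hs : ∀ i, 0 < i → i ≤ p → s i = 0 := by grind
  have hword : List.replicate q A.b ++ List.replicate (p + 1) A.h ++ [A.b] =
      lword (p + 1) (fun _ => 0) s := by
    rw [lword_succ_zero_left_of_inner_eq_zero hs]
    simp [s]
  rw [hword, evalL_lword, gword_succ_zero_left_of_inner_eq_zero hs]
  simp [s]

section Convolution

variable {Λ : Type}

theorem conv2_getElem?_bind_fst (u v : List Λ) (i : ℕ) :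
    (conv2 u v)[i]?.bind Prod.fst = u[i]? := by
  unfold conv2
  grind

theorem conv2_getElem?_bind_snd (u v : List Λ) (i : ℕ) :
    (conv2 u v)[i]?.bind Prod.snd = v[i]? := by
  unfold conv2
  grind

theorem conv2_injective2 : Function.Injective2 (conv2 (Λ := Λ)) := fun u u' v v' h =>
  ⟨List.ext_getElem? fun i => by
      rw [← conv2_getElem?_bind_fst u v, h, conv2_getElem?_bind_fst],
    List.ext_getElem? fun i => by
      rw [← conv2_getElem?_bind_snd u v, h, conv2_getElem?_bind_snd]⟩

theorem conv2_cons_cons (a c : Λ) (u v : List Λ) :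
    conv2 (a :: u) (c :: v) = (some a, some c) :: conv2 u v := by
  simp [conv2, List.range_succ_eq_map, Nat.succ_max_succ]

theorem conv2_nil_left (v : List Λ) : conv2 [] v = v.map fun c => (none, some c) := by
  apply List.ext_getElem <;> simp [conv2]

theorem conv2_append_right (u w : List Λ) :
    conv2 u (u ++ w) = u.map (fun c => (some c, some c)) ++ w.map fun c => (none, some c) := by
  induction u with
  | nil => simp [conv2_nil_left]
  | cons a u ih => simp [conv2_cons_cons, ih]

end Convolution

theorem conv2_replicate_mem_Lx1inv_iff (q p : ℕ) :
    conv2 (List.replicate q A.b) (List.replicate q A.b ++ List.replicate (p + 1) A.h ++ [A.b])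
      ∈ Lx1inv ↔ q = p := by
  have hrel : evalL (List.replicate q A.b ++ List.replicate (p + 1) A.h ++ [A.b]) =
      evalL (List.replicate q A.b) * (x 1)⁻¹ ↔ q = p := by
    rw [evalL_replicate_append, evalL_replicate, x_inv_pow_mul_x_inv zero_lt_one, mul_left_inj,
      inv_inj, x_injective.eq_iff]
    omega
  constructor
  · rintro ⟨u, -, v, -, huv, heval⟩
    obtain ⟨rfl, rfl⟩ := conv2_injective2 huv.symm
    exact hrel.1 heval
  · intro hqp
    exact ⟨_, replicate_mem_Linf q, _, replicate_append_mem_Linf q p, rfl, hrel.2 hqp⟩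

theorem Language.IsRegular.exists_replicate_pump {α : Type*} {L : Language α}
    (hL : L.IsRegular) : ∃ N, ∀ (c : α) (t : List α) (n : ℕ), N ≤ n →
      List.replicate n c ++ t ∈ L → ∃ k > 0, List.replicate (n + k) c ++ t ∈ L := by
  obtain ⟨σ, _, M, rfl⟩ := hL
  refine ⟨Fintype.card σ, fun c t n hn hmem => ?_⟩
  obtain ⟨a, b, d, hsplit, hlen, hb, hpump⟩ := M.pumping_lemma hmem (by simp; omega)
  have hprefix : a ++ b <+: List.replicate n c :=
    List.prefix_of_prefix_length_le ⟨d, hsplit.symm⟩ (List.prefix_append _ _) (by simp; omega)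
  have hconst : ∀ y ∈ a ++ b, y = c := fun y hy => List.eq_of_mem_replicate (hprefix.subset hy)
  obtain ⟨i, rfl⟩ : ∃ i, a = List.replicate i c :=
    ⟨_, List.eq_replicate_iff.2 ⟨rfl, fun y hy => hconst y (by simp [hy])⟩⟩
  obtain ⟨j, rfl⟩ : ∃ j, b = List.replicate j c :=
    ⟨_, List.eq_replicate_iff.2 ⟨rfl, fun y hy => hconst y (by simp [hy])⟩⟩
  refine ⟨j, by simpa [Nat.pos_iff_ne_zero] using hb, ?_⟩
  have hpumped : List.replicate (n + j) c ++ t =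
      List.replicate i c ++ (List.replicate j c ++ List.replicate j c) ++ d := by
    rw [add_comm, ← List.replicate_append_replicate, List.append_assoc, hsplit]
    simp only [← List.append_assoc, List.replicate_append_replicate]
    congr 2
    omega
  have hsquare : List.replicate j c ++ List.replicate j c ∈
      KStar.kstar ({List.replicate j c} : Language α) := by
    simpa using Language.join_mem_kstar (l := {List.replicate j c})
      (L := [List.replicate j c, List.replicate j c]) (by simp; rfl)
  exact hpumped ▸ hpump (Language.append_mem_mul (Language.append_mem_mul rfl hsquare) rfl)

/-- The multiplier language `L_{x_1^{-1}}` is not regular.  Moreover, for every `p`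
the string `⊗(b^p, b^p #^{p+1} b)` lies in `L_{x_1^{-1}}` but cannot be pumped:
for every `m > 0`, `⊗(b^{p+m}, b^{p+m} #^{p+1} b) ∉ L_{x_1^{-1}}`. -/
theorem Lx1inv_not_regular :
    ¬ Lx1inv.IsRegular ∧
    ∀ p : ℕ,
      conv2 (List.replicate p A.b)
        (List.replicate p A.b ++ List.replicate (p + 1) A.h ++ [A.b]) ∈ Lx1inv ∧
      ∀ m : ℕ, 0 < m →
        conv2 (List.replicate (p + m) A.b)
          (List.replicate (p + m) A.b ++ List.replicate (p + 1) A.h ++ [A.b]) ∉ Lx1inv := by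
  refine ⟨fun hreg => ?_, fun p => ⟨(conv2_replicate_mem_Lx1inv_iff p p).2 rfl,
    fun m hm hmem => by have := (conv2_replicate_mem_Lx1inv_iff _ _).1 hmem; omega⟩⟩
  obtain ⟨N, hpump⟩ := hreg.exists_replicate_pump
  have hconv : ∀ n, conv2 (List.replicate n A.b)
      (List.replicate n A.b ++ List.replicate (N + 1) A.h ++ [A.b]) =
      List.replicate n (some A.b, some A.b) ++
        (List.replicate (N + 1) A.h ++ [A.b]).map fun c => (none, some c) := by
    intro n
    rw [List.append_assoc, conv2_append_right, List.map_replicate]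
  have hmem := (conv2_replicate_mem_Lx1inv_iff N N).2 rfl
  rw [hconv] at hmem
  obtain ⟨k, hk, hmem'⟩ := hpump _ _ N le_rfl hmem
  rw [← hconv, conv2_replicate_mem_Lx1inv_iff] at hmem'
  omega
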